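/- arXiv:1707.01337 — 6 statements merged into one kernel-verified Lean document; each statement's English description precedes it below -/
import Mathlib

section
/- Let e and f be convex sets in ℝ^d with tangent (direction) spaces E = span(e - x) and F = span(f - y). If the relative interiors of e and f intersect, then the dimension of the affine span of e ∩ f equals dim(E ∩ F). -/
/-!
If `z` lies in the relative interiors of both `e` and `f` and `v` is a direction of both, then
`z + t • v` stays in `e` and in `f` for all small `t`; taking such a `t ≠ 0` exhibits `v` as a
direction of `e ∩ f`. Hence the direction of `e ∩ f` is `E ⊓ F`.
-/

open Set Filter Topology

section IntrinsicInterior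

variable {V P : Type*} [AddCommGroup V] [Module ℝ V] [TopologicalSpace V] [ContinuousSMul ℝ V]
  [TopologicalSpace P] [AddTorsor V P] [ContinuousVAdd V P]

theorem eventually_smul_vadd_mem_of_mem_intrinsicInterior {s : Set P} {z : P} {v : V}
    (hz : z ∈ intrinsicInterior ℝ s) (hv : v ∈ vectorSpan ℝ s) :
    ∀ᶠ t in 𝓝 (0 : ℝ), t • v +ᵥ z ∈ s := by
  obtain ⟨z', hz', rfl⟩ := hz
  have hline : ∀ t : ℝ, t • v +ᵥ (z' : P) ∈ affineSpan ℝ s := fun t =>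
    AffineSubspace.vadd_mem_of_mem_direction
      (by rw [direction_affineSpan]; exact Submodule.smul_mem _ t hv) z'.2
  let γ : ℝ → affineSpan ℝ s := fun t => ⟨t • v +ᵥ (z' : P), hline t⟩
  have hγ : Continuous γ :=
    ((continuous_id.smul continuous_const).vadd continuous_const).subtype_mk _
  have hγ0 : γ 0 = z' := Subtype.ext (by simp [γ])
  exact hγ.continuousAt.preimage_mem_nhds (hγ0 ▸ mem_interior_iff_mem_nhds.mp hz')

theorem vectorSpan_inter_eq_inf_of_intrinsicInterior_inter_nonempty {s t : Set P}
    (h : (intrinsicInterior ℝ s ∩ intrinsicInterior ℝ t).Nonempty) :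
    vectorSpan ℝ (s ∩ t) = vectorSpan ℝ s ⊓ vectorSpan ℝ t := by
  refine le_antisymm (le_inf (vectorSpan_mono ℝ inter_subset_left)
    (vectorSpan_mono ℝ inter_subset_right)) ?_
  rintro v ⟨hvs, hvt⟩
  obtain ⟨z, hzs, hzt⟩ := h
  have hnear : ∀ᶠ r in 𝓝[≠] (0 : ℝ), r • v +ᵥ z ∈ s ∩ t ∧ r ≠ 0 :=
    (((eventually_smul_vadd_mem_of_mem_intrinsicInterior hzs hvs).and
      (eventually_smul_vadd_mem_of_mem_intrinsicInterior hzt hvt)).filter_mono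
        nhdsWithin_le_nhds).and self_mem_nhdsWithin
  obtain ⟨r, hr, hr0⟩ := hnear.exists
  have hz : z ∈ s ∩ t := ⟨intrinsicInterior_subset hzs, intrinsicInterior_subset hzt⟩
  have hrv : r • v ∈ vectorSpan ℝ (s ∩ t) := by
    simpa using vsub_mem_vectorSpan ℝ hr hz
  exact (Submodule.smul_mem_iff _ hr0).mp hrv

end IntrinsicInterior

theorem dim_inter_eq_dim_tangent_inter_general {d : ℕ}
    (e f : Set (EuclideanSpace ℝ (Fin d)))
    (x y : EuclideanSpace ℝ (Fin d)) (hx : x ∈ e) (hy : y ∈ f)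
    (E F : Submodule ℝ (EuclideanSpace ℝ (Fin d)))
    (hE : E = Submodule.span ℝ ((· - x) '' e))
    (hF : F = Submodule.span ℝ ((· - y) '' f))
    (hri : (intrinsicInterior ℝ e ∩ intrinsicInterior ℝ f).Nonempty) :
    Module.finrank ℝ (vectorSpan ℝ (e ∩ f)) = Module.finrank ℝ ↥(E ⊓ F) := by
  have hEe : E = vectorSpan ℝ e := by rw [hE, vectorSpan_eq_span_vsub_set_right ℝ hx]; rfl
  have hFf : F = vectorSpan ℝ f := by rw [hF, vectorSpan_eq_span_vsub_set_right ℝ hy]; rfl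
  rw [hEe, hFf, vectorSpan_inter_eq_inf_of_intrinsicInterior_inter_nonempty hri]

/-- If the relative interiors of convex sets `e` and `f` in `ℝ^d` intersect,
then the dimension of the affine span of `e ∩ f` equals `dim (E ⊓ F)` where `E, F` are the
tangent spaces `span (e - x)`, `span (f - y)`. -/
theorem dim_inter_eq_dim_tangent_inter {d : ℕ}
    (e f : Set (EuclideanSpace ℝ (Fin d))) (he : Convex ℝ e) (hf : Convex ℝ f)
    (x y : EuclideanSpace ℝ (Fin d)) (hx : x ∈ e) (hy : y ∈ f)
    (E F : Submodule ℝ (EuclideanSpace ℝ (Fin d)))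
    (hE : E = Submodule.span ℝ ((· - x) '' e))
    (hF : F = Submodule.span ℝ ((· - y) '' f))
    (hri : (intrinsicInterior ℝ e ∩ intrinsicInterior ℝ f).Nonempty) :
    Module.finrank ℝ (vectorSpan ℝ (e ∩ f)) = Module.finrank ℝ ↥(E ⊓ F) :=
  dim_inter_eq_dim_tangent_inter_general e f x y hx hy E F hE hF hri
end

section
/- Let f ⊆ f' and e be convex sets in ℝ^d with tangent spaces F ⊆ F' and E respectively. Assume (i) relint(f) ∩ relint(e) ≠ ∅, (ii) dim(F') = dim(F) + 1, and (iii) dim(E ∩ F') = dim(E ∩ F) + 1. Then dim(e ∩ f') = dim(e ∩ f) + 1. -/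
/-!
Pick `z ∈ relint f ∩ relint e`. Near `z` both `e` and `f` fill out their affine spans, so
`vectorSpan (e ∩ f) = E ⊓ F`, while `vectorSpan (e ∩ f')` lies between `E ⊓ F` and `E ⊓ F'`, which
differ by one dimension. It remains to find a direction of `e ∩ f'` at `z` outside `F`.
Take `v ∈ (E ⊓ F') \ F`, so that `F' = F ⊕ ℝ v`. Some point of `f'` is `z + w + b v` with `w ∈ F`
and `b ≠ 0`; averaging it with `z - ε w ∈ f` cancels `w` and gives `z + c v ∈ f'` with `c ≠ 0`.
As `v ∈ E` and `z ∈ relint e`, a short initial piece of the segment `[z, z + c v]` lies in `e ∩ f'`.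
-/

open Module Topology Set

section

variable {V : Type*} [NormedAddCommGroup V] [NormedSpace ℝ V] {s t : Set V} {z u v w : V}

theorem span_image_sub_eq_vectorSpan (hz : z ∈ s) :
    Submodule.span ℝ ((· - z) '' s) = vectorSpan ℝ s := by
  simp only [vectorSpan_eq_span_vsub_set_right ℝ hz, vsub_eq_sub]

theorem mem_vectorSpan_of_add_smul_mem (hz : z ∈ s) {c : ℝ} (hc : c ≠ 0) (h : z + c • u ∈ s) :
    u ∈ vectorSpan ℝ s :=
  (Submodule.smul_mem_iff _ hc).1 (by simpa using vsub_mem_vectorSpan ℝ h hz)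

theorem eventually_add_smul_mem_of_mem_intrinsicInterior (hz : z ∈ intrinsicInterior ℝ s)
    (hu : u ∈ vectorSpan ℝ s) : ∀ᶠ c in 𝓝 (0 : ℝ), z + c • u ∈ s := by
  obtain ⟨z, hz, rfl⟩ := hz
  have hline (c : ℝ) : (z : V) + c • u ∈ affineSpan ℝ s := by
    rw [add_comm]
    exact AffineSubspace.vadd_mem_of_mem_direction
      (by rw [direction_affineSpan]; exact Submodule.smul_mem _ c hu) z.2
  let γ : ℝ → affineSpan ℝ s := fun c => ⟨z + c • u, hline c⟩
  have hγ0 : γ 0 = z := by ext; simp [γ]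
  have hγ : Continuous γ := by fun_prop
  exact hγ.continuousAt.preimage_mem_nhds (hγ0 ▸ mem_interior_iff_mem_nhds.1 hz)

theorem exists_pos_add_smul_mem_of_mem_intrinsicInterior (hz : z ∈ intrinsicInterior ℝ s)
    (hu : u ∈ vectorSpan ℝ s) : ∃ c : ℝ, 0 < c ∧ z + c • u ∈ s :=
  ((eventually_add_smul_mem_of_mem_intrinsicInterior hz hu).filter_mono
    (nhdsWithin_le_nhds (s := Ioi 0)) |>.and eventually_mem_nhdsWithin).exists.imp
    fun _ h => ⟨h.2, h.1⟩

theorem vectorSpan_inter_eq_inf (hzs : z ∈ intrinsicInterior ℝ s)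
    (hzt : z ∈ intrinsicInterior ℝ t) :
    vectorSpan ℝ (s ∩ t) = vectorSpan ℝ s ⊓ vectorSpan ℝ t := by
  refine le_antisymm (le_inf (vectorSpan_mono ℝ inter_subset_left)
    (vectorSpan_mono ℝ inter_subset_right)) fun u ⟨hus, hut⟩ => ?_
  obtain ⟨c, ⟨hcs, hct⟩, hc⟩ :=
    ((eventually_add_smul_mem_of_mem_intrinsicInterior hzs hus).and
      (eventually_add_smul_mem_of_mem_intrinsicInterior hzt hut)
      |>.filter_mono (nhdsWithin_le_nhds (s := {0}ᶜ)) |>.and eventually_mem_nhdsWithin).exists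
  exact mem_vectorSpan_of_add_smul_mem
    ⟨intrinsicInterior_subset hzs, intrinsicInterior_subset hzt⟩ hc ⟨hcs, hct⟩

theorem mem_vectorSpan_inter_of_add_smul_mem (ht : Convex ℝ t) (hzs : z ∈ intrinsicInterior ℝ s)
    (hzt : z ∈ t) (hu : u ∈ vectorSpan ℝ s) {c : ℝ} (hc : c ≠ 0) (hcu : z + c • u ∈ t) :
    u ∈ vectorSpan ℝ (s ∩ t) := by
  obtain ⟨a, ⟨has, ha1⟩, ha0⟩ :=
    ((eventually_add_smul_mem_of_mem_intrinsicInterior hzs (Submodule.smul_mem _ c hu)).and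
      (eventually_lt_nhds zero_lt_one) |>.filter_mono (nhdsWithin_le_nhds (s := Ioi 0))
      |>.and eventually_mem_nhdsWithin).exists
  have hat : z + a • c • u ∈ t := ht.add_smul_mem hzt hcu ⟨ha0.le, ha1.le⟩
  rw [smul_smul] at has hat
  exact mem_vectorSpan_of_add_smul_mem ⟨intrinsicInterior_subset hzs, hzt⟩
    (mul_ne_zero ha0.ne' hc) ⟨has, hat⟩

theorem exists_pos_add_smul_mem_of_add_add_mem (hst : s ⊆ t) (ht : Convex ℝ t)
    (hz : z ∈ intrinsicInterior ℝ s) (hw : w ∈ vectorSpan ℝ s) (h : z + (w + u) ∈ t) :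
    ∃ c : ℝ, 0 < c ∧ z + c • u ∈ t := by
  obtain ⟨ε, hε, hεs⟩ := exists_pos_add_smul_mem_of_mem_intrinsicInterior hz (neg_mem hw)
  refine ⟨ε / (1 + ε), by positivity, ?_⟩
  have hcombo := ht (hst hεs) h (a := 1 / (1 + ε)) (b := ε / (1 + ε)) (by positivity)
    (by positivity) (by field_simp)
  convert hcombo using 1
  match_scalars <;> field_simp; ring

theorem exists_add_smul_mem_of_vectorSpan_eq_sup (hst : s ⊆ t) (ht : Convex ℝ t)
    (hz : z ∈ intrinsicInterior ℝ s) (hv : v ∉ vectorSpan ℝ s)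
    (hspan : vectorSpan ℝ t = vectorSpan ℝ s ⊔ Submodule.span ℝ {v}) :
    ∃ c : ℝ, c ≠ 0 ∧ z + c • v ∈ t := by
  have hzt : z ∈ t := hst (intrinsicInterior_subset hz)
  obtain ⟨p, hpt, hp⟩ : ∃ p ∈ t, p - z ∉ vectorSpan ℝ s := by
    by_contra! h
    have hts : vectorSpan ℝ t ≤ vectorSpan ℝ s := by
      rw [vectorSpan_eq_span_vsub_set_right ℝ hzt, Submodule.span_le]
      rintro _ ⟨p, hp, rfl⟩
      exact h p hp
    exact hv (hts (hspan ▸ Submodule.mem_sup_right (Submodule.mem_span_singleton_self v)))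
  obtain ⟨w, hw, _, hbv, hpz⟩ :=
    Submodule.mem_sup.1 (hspan ▸ vsub_mem_vectorSpan ℝ hpt hzt : p - z ∈ _)
  obtain ⟨b, rfl⟩ := Submodule.mem_span_singleton.1 hbv
  have hb : b ≠ 0 := by
    rintro rfl
    exact hp (by simpa [← hpz] using hw)
  obtain ⟨c, hc, hcv⟩ := exists_pos_add_smul_mem_of_add_add_mem hst ht hz hw
    (by rwa [hpz, add_sub_cancel] : z + (w + b • v) ∈ t)
  exact ⟨c * b, mul_ne_zero hc.ne' hb, by rwa [mul_smul]⟩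

end

theorem Submodule.eq_sup_span_singleton_of_finrank_eq_succ {K M : Type*} [DivisionRing K]
    [AddCommGroup M] [Module K M] [FiniteDimensional K M] {W W' : Submodule K M} {v : M}
    (hle : W ≤ W') (hW' : finrank K W' = finrank K W + 1) (hv : v ∈ W') (hvW : v ∉ W) :
    W' = W ⊔ span K {v} :=
  (eq_of_le_of_finrank_eq (sup_le hle ((span_singleton_le_iff_mem v W').2 hv))
    (by rw [finrank_sup_span_singleton hvW, hW'])).symm

theorem dim_inter_succ_general {d : ℕ}
    (e f f' : Set (EuclideanSpace ℝ (Fin d)))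
    (hf' : Convex ℝ f') (hff' : f ⊆ f')
    (x y y' : EuclideanSpace ℝ (Fin d)) (hx : x ∈ e) (hy : y ∈ f) (hy' : y' ∈ f')
    (E F F' : Submodule ℝ (EuclideanSpace ℝ (Fin d)))
    (hE : E = Submodule.span ℝ ((· - x) '' e))
    (hF : F = Submodule.span ℝ ((· - y) '' f))
    (hF' : F' = Submodule.span ℝ ((· - y') '' f'))
    (hri : (intrinsicInterior ℝ f ∩ intrinsicInterior ℝ e).Nonempty)
    (hdimF : Module.finrank ℝ F' = Module.finrank ℝ F + 1)
    (hdimEF : Module.finrank ℝ ↥(E ⊓ F') = Module.finrank ℝ ↥(E ⊓ F) + 1) :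
    Module.finrank ℝ (vectorSpan ℝ (e ∩ f')) = Module.finrank ℝ (vectorSpan ℝ (e ∩ f)) + 1 := by
  obtain ⟨z, hzf, hze⟩ := hri
  rw [span_image_sub_eq_vectorSpan hx] at hE
  rw [span_image_sub_eq_vectorSpan hy] at hF
  rw [span_image_sub_eq_vectorSpan hy'] at hF'
  subst hE hF hF'
  have hFF' : vectorSpan ℝ f ≤ vectorSpan ℝ f' := vectorSpan_mono ℝ hff'
  have hef : vectorSpan ℝ (e ∩ f) = vectorSpan ℝ e ⊓ vectorSpan ℝ f :=
    vectorSpan_inter_eq_inf hze hzf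
  obtain ⟨v, ⟨hve, hvf'⟩, hv⟩ := SetLike.exists_of_lt <|
    (inf_le_inf_left _ hFF').lt_of_ne fun h => by rw [h] at hdimEF; omega
  have hvf : v ∉ vectorSpan ℝ f := fun h => hv ⟨hve, h⟩
  obtain ⟨c, hc, hcv⟩ := exists_add_smul_mem_of_vectorSpan_eq_sup hff' hf' hzf hvf
    (Submodule.eq_sup_span_singleton_of_finrank_eq_succ hFF' hdimF hvf' hvf)
  have hvef' : v ∈ vectorSpan ℝ (e ∩ f') := mem_vectorSpan_inter_of_add_smul_mem hf' hze
    (hff' (intrinsicInterior_subset hzf)) hve hc hcv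
  have hlt : vectorSpan ℝ (e ∩ f) < vectorSpan ℝ (e ∩ f') :=
    SetLike.lt_iff_le_and_exists.2 ⟨vectorSpan_mono ℝ (inter_subset_inter_right _ hff'),
      v, hvef', hef ▸ hv⟩
  have hle : vectorSpan ℝ (e ∩ f') ≤ vectorSpan ℝ e ⊓ vectorSpan ℝ f' :=
    le_inf (vectorSpan_mono ℝ inter_subset_left) (vectorSpan_mono ℝ inter_subset_right)
  rw [hef] at hlt ⊢
  have := Submodule.finrank_lt_finrank_of_lt hlt
  have := Submodule.finrank_mono hle
  omega

/-- If `f ⊆ f'` and `e` are convex, `relint f ∩ relint e ≠ ∅`,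
`dim F' = dim F + 1` and `dim (E ⊓ F') = dim (E ⊓ F) + 1`, then
`dim (e ∩ f') = dim (e ∩ f) + 1` (dimensions of convex sets = dim of their affine spans). -/
theorem dim_inter_succ {d : ℕ}
    (e f f' : Set (EuclideanSpace ℝ (Fin d)))
    (he : Convex ℝ e) (hf : Convex ℝ f) (hf' : Convex ℝ f') (hff' : f ⊆ f')
    (x y y' : EuclideanSpace ℝ (Fin d)) (hx : x ∈ e) (hy : y ∈ f) (hy' : y' ∈ f')
    (E F F' : Submodule ℝ (EuclideanSpace ℝ (Fin d)))
    (hE : E = Submodule.span ℝ ((· - x) '' e))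
    (hF : F = Submodule.span ℝ ((· - y) '' f))
    (hF' : F' = Submodule.span ℝ ((· - y') '' f'))
    (hri : (intrinsicInterior ℝ f ∩ intrinsicInterior ℝ e).Nonempty)
    (hdimF : Module.finrank ℝ F' = Module.finrank ℝ F + 1)
    (hdimEF : Module.finrank ℝ ↥(E ⊓ F') = Module.finrank ℝ ↥(E ⊓ F) + 1) :
    Module.finrank ℝ (vectorSpan ℝ (e ∩ f')) = Module.finrank ℝ (vectorSpan ℝ (e ∩ f)) + 1 :=
  dim_inter_succ_general e f f' hf' hff' x y y' hx hy hy' E F F' hE hF hF' hri hdimF hdimEF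
end

section
/- Under the hypotheses of the previous lemma (f ⊆ f', relint(f) ∩ relint(e) ≠ ∅, dim F' = dim F + 1, dim(E ∩ F') = dim(E ∩ F) + 1), the relative interiors of e and f' intersect: relint(e) ∩ relint(f') ≠ ∅. -/
/-!
Take `z ∈ ri f ∩ ri e` and `w ∈ ri f'`. The dimension hypotheses give `v ∈ E` with
`F' = F ⊔ ℝ ∙ v`, so `w - z = u + c • v` with `u ∈ F`. As `z ∈ ri f`, the point
`a = z - (t / (1 - t)) • u` lies in `f ⊆ f'` for small `t > 0`, so the point of the segment from
`a` to `w` at parameter `t`, namely `z + (t * c) • v`, lies in `ri f'`. Since `v ∈ E`, the same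
point lies in `ri e` once `t` is small.
-/

open Set Filter Topology Module AffineMap

section IntrinsicInterior

variable {V : Type*} [AddCommGroup V] [Module ℝ V] [TopologicalSpace V] [IsTopologicalAddGroup V]
  [ContinuousSMul ℝ V] {s : Set V}

theorem Convex.lineMap_mem_intrinsicInterior (hs : Convex ℝ s) {a w : V} (ha : a ∈ s)
    (hw : w ∈ intrinsicInterior ℝ s) {t : ℝ} (ht₀ : 0 < t) (ht₁ : t ≤ 1) :
    lineMap a w t ∈ intrinsicInterior ℝ s := by
  obtain ⟨w', hw', rfl⟩ := hw
  let a' : affineSpan ℝ s := ⟨a, subset_affineSpan ℝ s ha⟩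
  have : Nonempty (affineSpan ℝ s) := ⟨a'⟩
  have hcoe : ∀ q : affineSpan ℝ s, (homothety a' t q : V) = lineMap a (q : V) t := by
    intro q
    simp [homothety_apply, lineMap_apply, a']
  have hmaps : homothety a' t '' ((↑) ⁻¹' s) ⊆ (↑) ⁻¹' s := by
    rintro _ ⟨q, hq, rfl⟩
    simpa [hcoe, lineMap_apply_module] using hs ha hq (by linarith) ht₀.le (by ring)
  refine ⟨homothety a' t w', ?_, hcoe w'⟩
  exact interior_mono hmaps <|
    (homothety_isOpenMap a' t ht₀.ne').image_interior_subset _ (mem_image_of_mem _ hw')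

theorem eventually_add_smul_mem_intrinsicInterior {z u : V} (hz : z ∈ intrinsicInterior ℝ s)
    (hu : u ∈ (affineSpan ℝ s).direction) :
    ∀ᶠ t in 𝓝 (0 : ℝ), z + t • u ∈ intrinsicInterior ℝ s := by
  obtain ⟨z', hz', rfl⟩ := hz
  let g : ℝ → affineSpan ℝ s := fun t =>
    ⟨z' + t • u, by
      rw [add_comm]; exact AffineSubspace.vadd_mem_of_mem_direction (Submodule.smul_mem _ t hu) z'.2⟩
  have hg : Continuous g := by fun_prop
  filter_upwards [hg.tendsto' 0 z' (by simp [g]) |>.eventually (isOpen_interior.eventually_mem hz')]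
    with t ht
  exact ⟨g t, ht, rfl⟩

theorem Convex.eventually_lineMap_sub_smul_mem_intrinsicInterior {s s' : Set V}
    (hs' : Convex ℝ s') (hss' : s ⊆ s') {z w u : V} (hz : z ∈ intrinsicInterior ℝ s)
    (hw : w ∈ intrinsicInterior ℝ s') (hu : u ∈ (affineSpan ℝ s).direction) :
    ∀ᶠ t in 𝓝[>] (0 : ℝ), lineMap z w t - t • u ∈ intrinsicInterior ℝ s' := by
  have hlim : Tendsto (fun t : ℝ => t / (1 - t)) (𝓝[>] 0) (𝓝 0) := by
    have : ContinuousAt (fun t : ℝ => t / (1 - t)) 0 := by fun_prop (disch := norm_num)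
    simpa using this.tendsto.mono_left nhdsWithin_le_nhds
  filter_upwards [hlim.eventually (eventually_add_smul_mem_intrinsicInterior hz (neg_mem hu)),
    Ioo_mem_nhdsGT one_pos] with t ha ht
  have ht₁ : 1 - t ≠ 0 := by linarith [ht.2]
  have hsplit : lineMap (z + (t / (1 - t)) • -u) w t = lineMap z w t - t • u := by
    simp only [lineMap_apply_module, smul_add, smul_smul, smul_neg]
    rw [mul_div_cancel₀ _ ht₁]
    abel
  rw [← hsplit]
  exact hs'.lineMap_mem_intrinsicInterior (hss' (intrinsicInterior_subset ha)) hw ht.1 ht.2.le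

end IntrinsicInterior

theorem span_image_sub_eq_direction_affineSpan {k V : Type*} [Ring k] [AddCommGroup V]
    [Module k V] {s : Set V} {p : V} (hp : p ∈ s) :
    Submodule.span k ((· - p) '' s) = (affineSpan k s).direction := by
  rw [direction_affineSpan, vectorSpan_eq_span_vsub_set_right k hp]
  rfl

theorem Submodule.sup_span_singleton_eq_of_finrank_eq_succ {K W : Type*} [DivisionRing K]
    [AddCommGroup W] [Module K W] {F F' : Submodule K W} {v : W} (hFF' : F ≤ F')
    (hrank : finrank K F' = finrank K F + 1) (hv : v ∈ F') (hvF : v ∉ F) :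
    F ⊔ K ∙ v = F' := by
  have : FiniteDimensional K F' := Module.finite_of_finrank_pos (by omega)
  have hle : F ⊔ K ∙ v ≤ F' := sup_le hFF' ((span_singleton_le_iff_mem v F').2 hv)
  have : FiniteDimensional K ↥(F ⊔ K ∙ v) := Submodule.finiteDimensional_of_le hle
  have hlt : F < F ⊔ K ∙ v :=
    left_lt_sup.2 fun h => hvF (h (mem_span_singleton_self v))
  have := finrank_lt_finrank_of_lt hlt
  exact eq_of_le_of_finrank_le hle (by omega)

theorem relint_inter_nonempty_general {d : ℕ}
    (e f f' : Set (EuclideanSpace ℝ (Fin d)))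
    (hf' : Convex ℝ f') (hff' : f ⊆ f')
    (x y y' : EuclideanSpace ℝ (Fin d)) (hx : x ∈ e) (hy : y ∈ f) (hy' : y' ∈ f')
    (E F F' : Submodule ℝ (EuclideanSpace ℝ (Fin d)))
    (hE : E = Submodule.span ℝ ((· - x) '' e))
    (hF : F = Submodule.span ℝ ((· - y) '' f))
    (hF' : F' = Submodule.span ℝ ((· - y') '' f'))
    (hri : (intrinsicInterior ℝ f ∩ intrinsicInterior ℝ e).Nonempty)
    (hdimF : Module.finrank ℝ F' = Module.finrank ℝ F + 1)
    (hdimEF : Module.finrank ℝ ↥(E ⊓ F') = Module.finrank ℝ ↥(E ⊓ F) + 1) :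
    (intrinsicInterior ℝ e ∩ intrinsicInterior ℝ f').Nonempty := by
  rw [span_image_sub_eq_direction_affineSpan hx] at hE
  rw [span_image_sub_eq_direction_affineSpan hy] at hF
  rw [span_image_sub_eq_direction_affineSpan hy'] at hF'
  have hFF' : F ≤ F' := hF ▸ hF' ▸ AffineSubspace.direction_le (affineSpan_mono ℝ hff')
  obtain ⟨v, ⟨hvE, hvF'⟩, hvF⟩ : ∃ v ∈ E ⊓ F', v ∉ F := by
    by_contra! h
    have : E ⊓ F' = E ⊓ F := le_antisymm (le_inf inf_le_left h) (inf_le_inf_left E hFF')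
    rw [this] at hdimEF
    omega
  obtain ⟨z, hzf, hze⟩ := hri
  obtain ⟨w, hw⟩ := Set.Nonempty.intrinsicInterior hf' ⟨y', hy'⟩
  have hwz : w - z ∈ F ⊔ ℝ ∙ v := by
    rw [Submodule.sup_span_singleton_eq_of_finrank_eq_succ hFF' hdimF hvF' hvF, hF',
      direction_affineSpan]
    exact vsub_mem_vectorSpan ℝ (intrinsicInterior_subset hw) (hff' (intrinsicInterior_subset hzf))
  obtain ⟨u, hu, _, hc, hsum⟩ := Submodule.mem_sup.1 hwz
  obtain ⟨c, rfl⟩ := Submodule.mem_span_singleton.1 hc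
  have he : ∀ᶠ t in 𝓝[>] (0 : ℝ), z + t • c • v ∈ intrinsicInterior ℝ e :=
    (eventually_add_smul_mem_intrinsicInterior hze (hE ▸ E.smul_mem c hvE)).filter_mono
      nhdsWithin_le_nhds
  have hf'' := hf'.eventually_lineMap_sub_smul_mem_intrinsicInterior hff' hzf hw (hF ▸ hu)
  obtain ⟨t, hte, htf'⟩ := (he.and hf'').exists
  refine ⟨_, hte, ?_⟩
  convert htf' using 1
  rw [lineMap_apply_module, sub_eq_iff_eq_add'.1 hsum.symm]
  module

/-- Under the hypotheses of Statement 1 (`f ⊆ f'` convex, tangent spaces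
`F ⊆ F'`, `E`, `relint f ∩ relint e ≠ ∅`, `dim F' = dim F + 1`,
`dim (E ⊓ F') = dim (E ⊓ F) + 1`), the relative interiors of `e` and `f'` intersect. -/
theorem relint_inter_nonempty {d : ℕ}
    (e f f' : Set (EuclideanSpace ℝ (Fin d)))
    (he : Convex ℝ e) (hf : Convex ℝ f) (hf' : Convex ℝ f') (hff' : f ⊆ f')
    (x y y' : EuclideanSpace ℝ (Fin d)) (hx : x ∈ e) (hy : y ∈ f) (hy' : y' ∈ f')
    (E F F' : Submodule ℝ (EuclideanSpace ℝ (Fin d)))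
    (hE : E = Submodule.span ℝ ((· - x) '' e))
    (hF : F = Submodule.span ℝ ((· - y) '' f))
    (hF' : F' = Submodule.span ℝ ((· - y') '' f'))
    (hri : (intrinsicInterior ℝ f ∩ intrinsicInterior ℝ e).Nonempty)
    (hdimF : Module.finrank ℝ F' = Module.finrank ℝ F + 1)
    (hdimEF : Module.finrank ℝ ↥(E ⊓ F') = Module.finrank ℝ ↥(E ⊓ F) + 1) :
    (intrinsicInterior ℝ e ∩ intrinsicInterior ℝ f').Nonempty :=
  relint_inter_nonempty_general e f f' hf' hff' x y y' hx hy hy' E F F' hE hF hF' hri hdimF hdimEF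
end

section
/- Let K ⊂ ℝ^d be a nonempty compact set and Y = {y_1, …, y_N} ⊂ ℝ^d. Define weights ψ⁰_i = -dist(y_i, K)². Then for every i, the Laguerre cell Lag_i(ψ⁰) = {x ∈ K : ∀j, ‖x - y_i‖² + ψ⁰_i ≤ ‖x - y_j‖² + ψ⁰_j} is nonempty; in fact it contains every point x ∈ K realizing dist(y_i, K) = ‖x - y_i‖. -/
/-- The `i`-th Laguerre cell of the weighted point cloud `(y, ψ)` on `K`. -/
def LaguerreCell {d N : ℕ} (K : Set (EuclideanSpace ℝ (Fin d)))
    (y : Fin N → EuclideanSpace ℝ (Fin d)) (ψ : Fin N → ℝ) (i : Fin N) :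
    Set (EuclideanSpace ℝ (Fin d)) :=
  {x ∈ K | ∀ j, ‖x - y i‖ ^ 2 + ψ i ≤ ‖x - y j‖ ^ 2 + ψ j}

/-- with weights `ψ⁰ i = -dist(y i, K)²`, every Laguerre cell is nonempty and
contains every point of `K` realizing the distance from `y i` to `K`. -/
theorem laguerre_nonempty_of_dist_weights {d N : ℕ}
    (K : Set (EuclideanSpace ℝ (Fin d))) (hK : IsCompact K) (hKne : K.Nonempty)
    (y : Fin N → EuclideanSpace ℝ (Fin d)) (ψ : Fin N → ℝ)
    (hψ : ∀ i, ψ i = -(Metric.infDist (y i) K) ^ 2) :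
    ∀ i, {x ∈ K | dist x (y i) = Metric.infDist (y i) K} ⊆ LaguerreCell K y ψ i ∧
      (LaguerreCell K y ψ i).Nonempty := by
  intro i
  have hsub : {x ∈ K | dist x (y i) = Metric.infDist (y i) K} ⊆ LaguerreCell K y ψ i := by
    rintro x ⟨hxK, hx⟩
    refine ⟨hxK, fun j => ?_⟩
    rw [hψ i, hψ j]
    have h1 : ‖x - y i‖ = Metric.infDist (y i) K := by
      rw [← hx]; rw [dist_eq_norm]
    have h2 : Metric.infDist (y j) K ≤ ‖x - y j‖ := by
      rw [show ‖x - y j‖ = dist (y j) x by rw [dist_eq_norm, ← norm_neg, neg_sub]]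
      exact Metric.infDist_le_dist_of_mem hxK
    have h3 : Metric.infDist (y j) K ^ 2 ≤ ‖x - y j‖ ^ 2 := by
      apply pow_le_pow_left₀ (Metric.infDist_nonneg) h2
    rw [h1]
    linarith
  refine ⟨hsub, ?_⟩
  obtain ⟨x, hxK, hx⟩ := hK.exists_infDist_eq_dist hKne (y i)
  exact ⟨x, hsub ⟨hxK, by rw [hx, dist_comm]⟩⟩
end

section
/- Let μ be a Borel probability measure on a compact set K ⊆ ℝ^d, ν = ∑_{i=1}^N ν_i δ_{y_i} a finitely supported probability measure, and ψ ∈ ℝ^N with μ(Lag_i(ψ)) = ν_i for all i and μ(Lag_i(ψ) ∩ Lag_j(ψ)) = 0 for all i ≠ j. Then the map T_ψ(x) = argmin_i (‖x - y_i‖² + ψ_i) (defined μ-a.e.) satisfies: for every measurable T : K → {y_1,…,y_N} with μ(T^{-1}(y_i)) = ν_i for all i, ∫_K ‖x - T_ψ(x)‖² dμ(x) ≤ ∫_K ‖x - T(x)‖² dμ(x). -/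
/-!
Extend `ψ` to a potential `φ` with `φ (y i) = ψ i`. For `x` in the `i`-th Laguerre cell the
defining inequalities give `‖x - y i‖² + φ (y i) ≤ ‖x - z‖² + φ z` for every `z = y j`, in
particular for `z = T x`. Since the cells overlap only in null sets and their masses add up to
`μ K`, almost every point of `K` lies in exactly one cell, where `T_ψ x = y i`; so
`‖x - T_ψ x‖² + φ (T_ψ x) ≤ ‖x - T x‖² + φ (T x)` for `μ`-a.e. `x ∈ K`. Integrating, the
potential terms cancel: `T_ψ` and `T` give every `y i` the same mass `ν i`, so both equal
`∑ ψ i ν i`.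
-/

open MeasureTheory

open Function

section FiniteRange

variable {α E ι : Type*} [MeasurableSpace α] {μ : Measure α}

theorem preimage_singleton_ae_eq_of_ae_cover {y : ι → E}
    (hy : Injective y) {A : ι → Set α} (hdisj : Pairwise (Disjoint on A))
    (hcover : ∀ᵐ x ∂μ, ∃ i, x ∈ A i) {T : α → E} (hT : ∀ i, ∀ x ∈ A i, T x = y i) (i : ι) :
    (T ⁻¹' {y i} : Set α) =ᵐ[μ] A i := by
  filter_upwards [hcover] with x ⟨j, hxj⟩
  change (x ∈ T ⁻¹' {y i}) = (x ∈ A i)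
  rw [eq_iff_iff, Set.mem_preimage, Set.mem_singleton_iff, hT j x hxj, hy.eq_iff]
  constructor
  · rintro rfl
    exact hxj
  · intro hxi
    by_contra hji
    exact Set.disjoint_left.1 (hdisj hji) hxj hxi

variable [Fintype ι]

theorem sum_measure_inter_preimage_singleton [MeasurableSpace E] [MeasurableSingletonClass E]
    {y : ι → E} (hy : Injective y) {T : α → E} (hT : Measurable T)
    {K : Set α} (hK : MeasurableSet K) (hTy : ∀ x ∈ K, ∃ i, T x = y i) :
    ∑ i, μ (K ∩ T ⁻¹' {y i}) = μ K := by
  have hcover : ⋃ i, K ∩ T ⁻¹' {y i} = K := by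
    ext x
    simp only [Set.mem_iUnion, Set.mem_inter_iff, Set.mem_preimage, Set.mem_singleton_iff]
    exact ⟨fun ⟨_, hx, _⟩ => hx, fun hx => (hTy x hx).imp fun _ hi => ⟨hx, hi⟩⟩
  have hdisj : Pairwise (Disjoint on fun i => K ∩ T ⁻¹' {y i}) := fun i j hij =>
    Set.disjoint_left.2 fun _ hi hj => hij (hy (hi.2.symm.trans hj.2))
  calc ∑ i, μ (K ∩ T ⁻¹' {y i}) = μ (⋃ i, K ∩ T ⁻¹' {y i}) := by
        rw [measure_iUnion hdisj fun i => hK.inter (hT (measurableSet_singleton _)), tsum_fintype]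
    _ = μ K := by rw [hcover]

theorem ae_restrict_exists_mem_of_sum_measure_eq [IsFiniteMeasure μ] {A : ι → Set α} {K : Set α}
    (hK : MeasurableSet K) (hA : ∀ i, MeasurableSet (A i)) (hAK : ∀ i, A i ⊆ K)
    (hdisj : Pairwise (Disjoint on A)) (hsum : ∑ i, μ (A i) = μ K) :
    ∀ᵐ x ∂μ.restrict K, ∃ i, x ∈ A i := by
  have hnull : μ (K \ ⋃ i, A i) = 0 := by
    rw [measure_sdiff (Set.iUnion_subset hAK) (MeasurableSet.iUnion hA).nullMeasurableSet
      (measure_ne_top _ _), measure_iUnion hdisj hA, tsum_fintype, hsum, tsub_self]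
  rw [ae_restrict_iff' hK, ae_iff]
  refine measure_mono_null (fun x hx => ?_) hnull
  push Not at hx
  simpa using hx

theorem comp_ae_eq_sum_indicator {y : ι → E} (hy : Injective y) {T : α → E}
    (hTy : ∀ᵐ x ∂μ, T x ∈ Set.range y) (φ : E → ℝ) :
    (fun x => φ (T x)) =ᵐ[μ] fun x => ∑ i, (T ⁻¹' {y i}).indicator (fun _ => φ (y i)) x := by
  filter_upwards [hTy] with x ⟨i, hi⟩
  rw [Finset.sum_eq_single i (fun j _ hji => ?_) (by simp),
    Set.indicator_of_mem (s := T ⁻¹' {y i}) hi.symm, hi]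
  exact Set.indicator_of_notMem (fun h => hy.ne hji (hi.trans h).symm) _

variable [MeasurableSpace E] [MeasurableSingletonClass E] {y : ι → E} {T : α → E}
  [IsFiniteMeasure μ]

theorem integrable_comp_of_ae_mem_range (hy : Injective y)
    (hT : Measurable T) (hTy : ∀ᵐ x ∂μ, T x ∈ Set.range y) (φ : E → ℝ) :
    Integrable (fun x => φ (T x)) μ :=
  (integrable_finsetSum _ fun i _ =>
    (integrable_const (φ (y i))).indicator (hT (measurableSet_singleton _))).congr
    (comp_ae_eq_sum_indicator hy hTy φ).symm

theorem integral_comp_of_ae_mem_range (hy : Injective y) (hT : Measurable T)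
    (hTy : ∀ᵐ x ∂μ, T x ∈ Set.range y) (φ : E → ℝ) :
    ∫ x, φ (T x) ∂μ = ∑ i, μ.real (T ⁻¹' {y i}) * φ (y i) := by
  rw [integral_congr_ae (comp_ae_eq_sum_indicator hy hTy φ), integral_finsetSum]
  · simp only [integral_indicator_const _ (hT (measurableSet_singleton _)), smul_eq_mul]
  exact fun i _ => (integrable_const (φ (y i))).indicator (hT (measurableSet_singleton _))

theorem integral_le_of_add_potential_le (hy : Injective y) {S : α → E} (hS : Measurable S)
    (hT : Measurable T) (hSy : ∀ᵐ x ∂μ, S x ∈ Set.range y) (hTy : ∀ᵐ x ∂μ, T x ∈ Set.range y)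
    (hfibre : ∀ i, μ (S ⁻¹' {y i}) = μ (T ⁻¹' {y i})) {c : α → E → ℝ}
    (hcS : Integrable (fun x => c x (S x)) μ) (hcT : Integrable (fun x => c x (T x)) μ)
    (φ : E → ℝ) (hle : ∀ᵐ x ∂μ, c x (S x) + φ (S x) ≤ c x (T x) + φ (T x)) :
    ∫ x, c x (S x) ∂μ ≤ ∫ x, c x (T x) ∂μ := by
  have hφS := integrable_comp_of_ae_mem_range hy hS hSy φ
  have hφT := integrable_comp_of_ae_mem_range hy hT hTy φ
  have hpot : ∫ x, φ (S x) ∂μ = ∫ x, φ (T x) ∂μ := by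
    simp only [integral_comp_of_ae_mem_range hy hS hSy, integral_comp_of_ae_mem_range hy hT hTy,
      measureReal_def, hfibre]
  have key : ∫ x, (c x (S x) + φ (S x)) ∂μ ≤ ∫ x, (c x (T x) + φ (T x)) ∂μ :=
    integral_mono_ae (hcS.add hφS) (hcT.add hφT) hle
  rw [integral_add hcS hφS, integral_add hcT hφT, hpot] at key
  linarith

end FiniteRange

theorem integrable_norm_sub_sq {E : Type*} [NormedAddCommGroup E] [MeasurableSpace E]
    [BorelSpace E] [SecondCountableTopology E] {μ : Measure E} [IsFiniteMeasure μ] {K S : Set E}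
    (hK : Bornology.IsBounded K) (hS : Bornology.IsBounded S) (hμK : ∀ᵐ x ∂μ, x ∈ K)
    {T : E → E} (hT : Measurable T) (hTS : ∀ᵐ x ∂μ, T x ∈ S) :
    Integrable (fun x => ‖x - T x‖ ^ 2) μ := by
  obtain ⟨C, hC⟩ := Metric.isBounded_iff.1 (hK.union hS)
  refine .of_bound ((measurable_id.sub hT).norm.pow_const 2).aestronglyMeasurable (C ^ 2) ?_
  filter_upwards [hμK, hTS] with x hxK hTx
  rw [Real.norm_of_nonneg (by positivity), ← dist_eq_norm]
  exact pow_le_pow_left₀ dist_nonneg (hC (.inl hxK) (.inr hTx)) 2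

section Laguerre

variable {d N : ℕ} {K : Set (EuclideanSpace ℝ (Fin d))} {y : Fin N → EuclideanSpace ℝ (Fin d)}
  {ψ : Fin N → ℝ}

theorem isClosed_laguerreCell (hK : IsClosed K) (i : Fin N) :
    IsClosed (LaguerreCell K y ψ i) := by
  have hcont : ∀ j, Continuous fun x : EuclideanSpace ℝ (Fin d) => ‖x - y j‖ ^ 2 + ψ j :=
    fun j => by fun_prop
  convert hK.inter (isClosed_iInter fun j => isClosed_le (hcont i) (hcont j)) using 1
  ext x
  simp [LaguerreCell]

theorem laguerreCell_subset (i : Fin N) : LaguerreCell K y ψ i ⊆ K :=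
  fun _ hx => hx.1

def exclusiveLaguerreCell (K : Set (EuclideanSpace ℝ (Fin d)))
    (y : Fin N → EuclideanSpace ℝ (Fin d)) (ψ : Fin N → ℝ) (i : Fin N) :
    Set (EuclideanSpace ℝ (Fin d)) :=
  LaguerreCell K y ψ i \ ⋃ (j) (_ : j ≠ i), LaguerreCell K y ψ j

theorem exclusiveLaguerreCell_subset (i : Fin N) :
    exclusiveLaguerreCell K y ψ i ⊆ LaguerreCell K y ψ i :=
  Set.sdiff_subset

theorem measurableSet_exclusiveLaguerreCell (hK : IsClosed K) (i : Fin N) :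
    MeasurableSet (exclusiveLaguerreCell K y ψ i) :=
  (isClosed_laguerreCell hK i).measurableSet.diff <| .iUnion fun j => .iUnion fun _ =>
    (isClosed_laguerreCell hK j).measurableSet

theorem pairwise_disjoint_exclusiveLaguerreCell :
    Pairwise (Disjoint on exclusiveLaguerreCell K y ψ) := fun _ _ hij =>
  Set.disjoint_left.2 fun _ hxi hxj => hxj.2 (Set.mem_biUnion hij hxi.1)

theorem measure_exclusiveLaguerreCell {μ : Measure (EuclideanSpace ℝ (Fin d))}
    (hover : ∀ i j, i ≠ j → μ (LaguerreCell K y ψ i ∩ LaguerreCell K y ψ j) = 0) (i : Fin N) :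
    μ (exclusiveLaguerreCell K y ψ i) = μ (LaguerreCell K y ψ i) := by
  refine measure_sdiff_null' ?_
  rw [Set.inter_iUnion₂]
  exact measure_iUnion_null fun j => measure_iUnion_null fun hji => hover i j (Ne.symm hji)

theorem ae_restrict_exists_mem_exclusiveLaguerreCell {μ : Measure (EuclideanSpace ℝ (Fin d))}
    [IsFiniteMeasure μ] (hK : IsClosed K)
    (hover : ∀ i j, i ≠ j → μ (LaguerreCell K y ψ i ∩ LaguerreCell K y ψ j) = 0)
    (hsum : ∑ i, μ (LaguerreCell K y ψ i) = μ K) :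
    ∀ᵐ x ∂μ.restrict K, ∃ i, x ∈ exclusiveLaguerreCell K y ψ i :=
  ae_restrict_exists_mem_of_sum_measure_eq hK.measurableSet
    (measurableSet_exclusiveLaguerreCell hK)
    (fun i => (exclusiveLaguerreCell_subset i).trans (laguerreCell_subset i))
    pairwise_disjoint_exclusiveLaguerreCell (by simpa only [measure_exclusiveLaguerreCell hover])

theorem measure_restrict_preimage_of_eqOn_exclusiveLaguerreCell
    {μ : Measure (EuclideanSpace ℝ (Fin d))} (hK : IsClosed K) (hy : Injective y)
    (hover : ∀ i j, i ≠ j → μ (LaguerreCell K y ψ i ∩ LaguerreCell K y ψ j) = 0)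
    (hcover : ∀ᵐ x ∂μ.restrict K, ∃ i, x ∈ exclusiveLaguerreCell K y ψ i)
    {Tψ : EuclideanSpace ℝ (Fin d) → EuclideanSpace ℝ (Fin d)}
    (hTψ : ∀ i, ∀ x ∈ exclusiveLaguerreCell K y ψ i, Tψ x = y i) (i : Fin N) :
    μ.restrict K (Tψ ⁻¹' {y i}) = μ (LaguerreCell K y ψ i) := by
  rw [measure_congr (preimage_singleton_ae_eq_of_ae_cover hy
      pairwise_disjoint_exclusiveLaguerreCell hcover hTψ i),
    Measure.restrict_apply (measurableSet_exclusiveLaguerreCell hK i),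
    Set.inter_eq_self_of_subset_left
      ((exclusiveLaguerreCell_subset i).trans (laguerreCell_subset i)),
    measure_exclusiveLaguerreCell hover]

end Laguerre

theorem laguerre_map_optimal_general {d N : ℕ}
    (K : Set (EuclideanSpace ℝ (Fin d))) (hK : IsCompact K)
    (μ : Measure (EuclideanSpace ℝ (Fin d))) [IsProbabilityMeasure μ]
    (y : Fin N → EuclideanSpace ℝ (Fin d)) (hy : Function.Injective y)
    (ν : Fin N → ℝ) (ψ : Fin N → ℝ)
    (hmass : ∀ i, (μ (LaguerreCell K y ψ i)).toReal = ν i)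
    (hover : ∀ i j, i ≠ j → μ (LaguerreCell K y ψ i ∩ LaguerreCell K y ψ j) = 0)
    (Tψ : EuclideanSpace ℝ (Fin d) → EuclideanSpace ℝ (Fin d)) (hTψmeas : Measurable Tψ)
    (hTψ : ∀ i, ∀ x ∈ LaguerreCell K y ψ i \ ⋃ (j) (_ : j ≠ i), LaguerreCell K y ψ j,
      Tψ x = y i)
    (T : EuclideanSpace ℝ (Fin d) → EuclideanSpace ℝ (Fin d)) (hTmeas : Measurable T)
    (hTY : ∀ x ∈ K, ∃ i, T x = y i)
    (hT : ∀ i, (μ (K ∩ T ⁻¹' {y i})).toReal = ν i) :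
    ∫ x in K, ‖x - Tψ x‖ ^ 2 ∂μ ≤ ∫ x in K, ‖x - T x‖ ^ 2 ∂μ := by
  have hKm : MeasurableSet K := hK.isClosed.measurableSet
  have hcellT : ∀ i, μ (LaguerreCell K y ψ i) = μ (K ∩ T ⁻¹' {y i}) := fun i =>
    (ENNReal.toReal_eq_toReal_iff' (measure_ne_top _ _) (measure_ne_top _ _)).1
      ((hmass i).trans (hT i).symm)
  have hcover := ae_restrict_exists_mem_exclusiveLaguerreCell hK.isClosed hover
    (by simpa only [hcellT] using sum_measure_inter_preimage_singleton hy hTmeas hKm hTY)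
  have hTψy : ∀ᵐ x ∂μ.restrict K, Tψ x ∈ Set.range y :=
    hcover.mono fun x ⟨i, hx⟩ => ⟨i, (hTψ i x hx).symm⟩
  have hTy : ∀ᵐ x ∂μ.restrict K, T x ∈ Set.range y :=
    (ae_restrict_mem hKm).mono fun x hx => (hTY x hx).imp fun _ => Eq.symm
  have hfibre (i : Fin N) : μ.restrict K (Tψ ⁻¹' {y i}) = μ.restrict K (T ⁻¹' {y i}) := by
    rw [measure_restrict_preimage_of_eqOn_exclusiveLaguerreCell hK.isClosed hy hover hcover hTψ,
      hcellT, Measure.restrict_apply (hTmeas (measurableSet_singleton _)), Set.inter_comm]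
  have hbdd := (Set.finite_range y).isBounded
  obtain ⟨φ, hφ⟩ : ∃ φ : EuclideanSpace ℝ (Fin d) → ℝ, ∀ i, φ (y i) = ψ i :=
    ⟨extend y ψ 0, hy.extend_apply ψ 0⟩
  refine integral_le_of_add_potential_le (c := fun x z => ‖x - z‖ ^ 2) hy hTψmeas hTmeas hTψy hTy
    hfibre (integrable_norm_sub_sq hK.isBounded hbdd (ae_restrict_mem hKm) hTψmeas hTψy)
    (integrable_norm_sub_sq hK.isBounded hbdd (ae_restrict_mem hKm) hTmeas hTy) φ ?_
  filter_upwards [hcover, hTy] with x ⟨i, hx⟩ ⟨j, hj⟩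
  rw [hTψ i x hx, ← hj, hφ, hφ]
  exact (exclusiveLaguerreCell_subset i hx).2 j

/-- if `ψ` solves the discrete Monge–Ampère system `μ(Lag_i ψ) = ν_i` and the
Laguerre cells pairwise overlap on `μ`-null sets, then the map `T_ψ` (sending the points of
`Lag_i ψ` that are in no other cell to `y i`) minimizes the quadratic transport cost among all
measurable maps `T : K → {y_1, …, y_N}` with `μ(T⁻¹(y_i)) = ν_i`. -/
theorem laguerre_map_optimal {d N : ℕ}
    (K : Set (EuclideanSpace ℝ (Fin d))) (hK : IsCompact K)
    (μ : Measure (EuclideanSpace ℝ (Fin d))) [IsProbabilityMeasure μ] (hμK : μ K = 1)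
    (y : Fin N → EuclideanSpace ℝ (Fin d)) (hy : Function.Injective y)
    (ν : Fin N → ℝ) (ψ : Fin N → ℝ)
    (hmass : ∀ i, (μ (LaguerreCell K y ψ i)).toReal = ν i)
    (hover : ∀ i j, i ≠ j → μ (LaguerreCell K y ψ i ∩ LaguerreCell K y ψ j) = 0)
    (Tψ : EuclideanSpace ℝ (Fin d) → EuclideanSpace ℝ (Fin d)) (hTψmeas : Measurable Tψ)
    (hTψ : ∀ i, ∀ x ∈ LaguerreCell K y ψ i \ ⋃ (j) (_ : j ≠ i), LaguerreCell K y ψ j,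
      Tψ x = y i)
    (T : EuclideanSpace ℝ (Fin d) → EuclideanSpace ℝ (Fin d)) (hTmeas : Measurable T)
    (hTY : ∀ x ∈ K, ∃ i, T x = y i)
    (hT : ∀ i, (μ (K ∩ T ⁻¹' {y i})).toReal = ν i) :
    ∫ x in K, ‖x - Tψ x‖ ^ 2 ∂μ ≤ ∫ x in K, ‖x - T x‖ ^ 2 ∂μ :=
  laguerre_map_optimal_general K hK μ y hy ν ψ hmass hover Tψ hTψmeas hTψ T hTmeas hTY hT
end

section
/- Let z_1,…,z_N ∈ ℝ^k be nonzero vectors whose conic hull equals ℝ^k, and let ρ : ℝ^k → ℝ be continuous. Define G(λ) = ∫_{K(λ)} ρ(x) dx where K(λ) = {x : ⟨x, z_i⟩ ≤ λ_i ∀i}. Then G is continuous on ℝ^N (in fact locally Lipschitz). -/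
/-!
For `λ` near `λ₀` all polyhedra `K(λ)` lie in one ball: because the `z i` positively span,
`max_i ⟪x, z i⟫ ≥ ε ‖x‖` for some `ε > 0`. Inside that ball `K(λ) \ K(λ')` is covered by the slabs
`λ' i < ⟪x, z i⟫ ≤ λ i`, each of volume `O(|λ i - λ' i|)`, and `ρ` is bounded there; hence `G` is
Lipschitz near `λ₀`.
-/

open MeasureTheory Metric Set Module
open scoped InnerProductSpace

theorem dist_setIntegral_le_of_norm_le_const {α F : Type*} [MeasurableSpace α]
    [NormedAddCommGroup F] [NormedSpace ℝ F] {μ : Measure α} {f : α → F} {s t : Set α} {C : ℝ}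
    (hs : MeasurableSet s) (ht : MeasurableSet t)
    (hfs : IntegrableOn f s μ) (hft : IntegrableOn f t μ)
    (hst : μ (s \ t) < ⊤) (hts : μ (t \ s) < ⊤) (hC : ∀ x ∈ s ∪ t, ‖f x‖ ≤ C) :
    dist (∫ x in s, f x ∂μ) (∫ x in t, f x ∂μ) ≤ C * μ.real (s \ t) + C * μ.real (t \ s) := by
  have hsplit : (∫ x in s, f x ∂μ) - ∫ x in t, f x ∂μ
      = (∫ x in s \ t, f x ∂μ) - ∫ x in t \ s, f x ∂μ := by
    rw [← integral_inter_add_sdiff ht hfs, ← integral_inter_add_sdiff hs hft, inter_comm]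
    abel
  rw [dist_eq_norm, hsplit]
  refine (norm_sub_le _ _).trans (add_le_add ?_ ?_)
  · exact norm_setIntegral_le_of_norm_le_const hst fun x hx => hC x (Or.inl hx.1)
  · exact norm_setIntegral_le_of_norm_le_const hts fun x hx => hC x (Or.inr hx.1)

variable {E : Type*} [NormedAddCommGroup E] [InnerProductSpace ℝ E]

/-- In an orthonormal basis whose first vector is `z / ‖z‖` the set lies in a box with one side
`(b - a) / ‖z‖` and all others `2 R`. -/
theorem volume_inner_mem_Ioc_inter_closedBall_le [FiniteDimensional ℝ E] [MeasurableSpace E]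
    [BorelSpace E] {z : E} (hz : z ≠ 0) {R : ℝ} (hR : 0 ≤ R) (a b : ℝ) :
    volume ({x : E | ⟪x, z⟫_ℝ ∈ Ioc a b} ∩ closedBall 0 R)
      ≤ ENNReal.ofReal ((2 * R) ^ (finrank ℝ E - 1) / ‖z‖ * (b - a)) := by
  have : Nontrivial E := nontrivial_of_ne z 0 hz
  set d := finrank ℝ E
  let i₀ : Fin d := ⟨0, finrank_pos⟩
  have hz' : 0 < ‖z‖ := norm_pos_iff.2 hz
  have hu : Orthonormal ℝ (({i₀} : Set (Fin d)).domRestrict fun _ => ‖z‖⁻¹ • z) :=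
    ⟨fun _ => norm_smul_inv_norm hz, fun i j hij => absurd (Subsingleton.elim i j) hij⟩
  obtain ⟨B, hB⟩ := Orthonormal.exists_orthonormalBasis_extension_of_card_eq (by simp [d]) hu
  have hBi₀ : ∀ x, B.repr x i₀ = ⟪x, z⟫_ℝ / ‖z‖ := fun x => by
    rw [B.repr_apply_apply, hB i₀ rfl, real_inner_smul_left, real_inner_comm, inv_mul_eq_div]
  let I : Fin d → Set ℝ := Function.update (fun _ => Icc (-R) R) i₀ (Ioc (a / ‖z‖) (b / ‖z‖))
  have hcoord : MeasurePreserving (WithLp.ofLp ∘ B.repr) :=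
    (PiLp.volume_preserving_ofLp (Fin d)).comp B.measurePreserving_repr
  have hsub : {x : E | ⟪x, z⟫_ℝ ∈ Ioc a b} ∩ closedBall 0 R
      ⊆ (WithLp.ofLp ∘ B.repr) ⁻¹' univ.pi I := by
    rintro x ⟨⟨hxa, hxb⟩, hxR⟩ j -
    rcases eq_or_ne j i₀ with rfl | hj
    · simp only [Function.comp_apply, I, Function.update_self, hBi₀]
      exact ⟨div_lt_div_of_pos_right hxa hz', div_le_div_of_nonneg_right hxb hz'.le⟩
    · simp only [Function.comp_apply, I, Function.update_of_ne hj, mem_Icc, ← abs_le,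
        ← Real.norm_eq_abs]
      calc ‖B.repr x j‖ ≤ ‖B.repr x‖ := PiLp.norm_apply_le _ j
        _ = ‖x‖ := B.repr.norm_map x
        _ ≤ R := mem_closedBall_zero_iff.1 hxR
  have hI : MeasurableSet (univ.pi I) := MeasurableSet.univ_pi fun j => by
    rcases eq_or_ne j i₀ with rfl | hj
    · simp only [I, Function.update_self]; exact measurableSet_Ioc
    · simp only [I, Function.update_of_ne hj]; exact measurableSet_Icc
  calc volume ({x : E | ⟪x, z⟫_ℝ ∈ Ioc a b} ∩ closedBall 0 R)
      ≤ volume (univ.pi I) :=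
        (measure_mono hsub).trans_eq (hcoord.measure_preimage hI.nullMeasurableSet)
    _ = ENNReal.ofReal ((b - a) / ‖z‖) * ENNReal.ofReal (2 * R) ^ (d - 1) := by
      have hIj : ∀ j ∈ ({i₀}ᶜ : Finset (Fin d)), volume (I j) = ENNReal.ofReal (2 * R) := by
        intro j hj
        rw [Finset.mem_compl, Finset.mem_singleton] at hj
        simp only [I, Function.update_of_ne hj, Real.volume_Icc, sub_neg_eq_add, two_mul]
      rw [volume_pi_pi, Fintype.prod_eq_mul_prod_compl i₀, Finset.prod_congr rfl hIj,
        Finset.prod_const, Finset.card_compl, Finset.card_singleton, Fintype.card_fin]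
      simp only [I, Function.update_self, Real.volume_Ioc, div_sub_div_same]
    _ = ENNReal.ofReal ((2 * R) ^ (d - 1) / ‖z‖ * (b - a)) := by
      rw [← ENNReal.ofReal_pow (by positivity), ← ENNReal.ofReal_mul' (by positivity)]
      congr 1; ring

section Cone

variable {ι : Type*} [Fintype ι] {z : ι → E}

theorem exists_inner_pos_of_forall_mem_cone
    (hcone : ∀ x : E, ∃ c : ι → ℝ, (∀ i, 0 ≤ c i) ∧ x = ∑ i, c i • z i) {x : E} (hx : x ≠ 0) :
    ∃ i, 0 < ⟪x, z i⟫_ℝ := by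
  obtain ⟨c, hc, hxc⟩ := hcone x
  by_contra! h
  refine hx (real_inner_self_nonpos.1 ?_)
  calc ⟪x, x⟫_ℝ = ∑ i, c i * ⟪x, z i⟫_ℝ := by
        nth_rewrite 2 [hxc]
        simp only [inner_sum, real_inner_smul_right]
    _ ≤ 0 := Finset.sum_nonpos fun i _ => mul_nonpos_of_nonneg_of_nonpos (hc i) (h i)

/-- Compactness of the unit sphere makes the positivity of `exists_inner_pos_of_forall_mem_cone`
uniform. -/
theorem exists_pos_mul_norm_le_inner_of_forall_mem_cone [FiniteDimensional ℝ E]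
    (hcone : ∀ x : E, ∃ c : ι → ℝ, (∀ i, 0 ≤ c i) ∧ x = ∑ i, c i • z i) :
    ∃ ε > 0, ∀ x ≠ 0, ∃ i, ε * ‖x‖ ≤ ⟪x, z i⟫_ℝ := by
  let U : ℕ → Set E := fun n => ⋃ i, {x | 1 / ((n : ℝ) + 1) < ⟪x, z i⟫_ℝ}
  have hU_open : ∀ n, IsOpen (U n) := fun n =>
    isOpen_iUnion fun i => isOpen_lt continuous_const (continuous_id.inner continuous_const)
  have hU_cover : sphere (0 : E) 1 ⊆ ⋃ n, U n := fun x hx => by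
    obtain ⟨i, hi⟩ :=
      exists_inner_pos_of_forall_mem_cone hcone (ne_zero_of_mem_unit_sphere ⟨x, hx⟩)
    obtain ⟨n, hn⟩ := exists_nat_one_div_lt hi
    exact mem_iUnion.2 ⟨n, mem_iUnion.2 ⟨i, hn⟩⟩
  have hU_mono : Monotone U := fun m n hmn =>
    iUnion_mono fun i => ofPred_subset_ofPred.2 fun x => (Nat.one_div_le_one_div hmn).trans_lt
  obtain ⟨n, hn⟩ := (isCompact_sphere (0 : E) 1).elim_directed_cover U hU_open hU_cover
    hU_mono.directed_le
  refine ⟨1 / ((n : ℝ) + 1), by positivity, fun x hx => ?_⟩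
  have hx' : 0 < ‖x‖ := norm_pos_iff.2 hx
  have hx_sphere : ‖x‖⁻¹ • x ∈ sphere (0 : E) 1 := by
    rw [mem_sphere_zero_iff_norm, norm_smul, norm_inv, norm_norm, inv_mul_cancel₀ hx'.ne']
  obtain ⟨i, hi⟩ := mem_iUnion.1 (hn hx_sphere)
  rw [mem_ofPred_eq, real_inner_smul_left, lt_inv_mul_iff₀ hx'] at hi
  exact ⟨i, by linarith⟩

end Cone

section Polyhedron

variable {ι : Type*} {z : ι → E}

def polyhedron (z : ι → E) (ν : ι → ℝ) : Set E := {x | ∀ i, ⟪x, z i⟫_ℝ ≤ ν i}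

theorem isClosed_polyhedron (z : ι → E) (ν : ι → ℝ) : IsClosed (polyhedron z ν) := by
  simp only [polyhedron, ofPred_forall]
  exact isClosed_iInter fun i => isClosed_le (continuous_id.inner continuous_const) continuous_const

variable [Fintype ι] [FiniteDimensional ℝ E]

theorem exists_polyhedron_subset_closedBall
    (hcone : ∀ x : E, ∃ c : ι → ℝ, (∀ i, 0 ≤ c i) ∧ x = ∑ i, c i • z i) :
    ∃ ε > 0, ∀ M, 0 ≤ M → ∀ ν : ι → ℝ, (∀ i, ν i ≤ M) →
      polyhedron z ν ⊆ closedBall 0 (M / ε) := by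
  obtain ⟨ε, hε, hεz⟩ := exists_pos_mul_norm_le_inner_of_forall_mem_cone hcone
  refine ⟨ε, hε, fun M hM ν hν x hx => ?_⟩
  rw [mem_closedBall_zero_iff, le_div_iff₀ hε, mul_comm]
  rcases eq_or_ne x 0 with rfl | hx0
  · simpa using hM
  · obtain ⟨i, hi⟩ := hεz x hx0
    exact hi.trans ((hx i).trans (hν i))

variable [MeasurableSpace E] [BorelSpace E]

theorem volume_polyhedron_sdiff_le (hz : ∀ i, z i ≠ 0) {R : ℝ} (hR : 0 ≤ R) {ν : ι → ℝ}
    (hν : polyhedron z ν ⊆ closedBall 0 R) (ν' : ι → ℝ) :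
    volume (polyhedron z ν \ polyhedron z ν')
      ≤ ENNReal.ofReal ((∑ i, (2 * R) ^ (finrank ℝ E - 1) / ‖z i‖) * dist ν ν') := by
  have hsub : polyhedron z ν \ polyhedron z ν'
      ⊆ ⋃ i, {x : E | ⟪x, z i⟫_ℝ ∈ Ioc (ν' i) (ν i)} ∩ closedBall 0 R := by
    rintro x ⟨hx, hx'⟩
    obtain ⟨i, hi⟩ := not_forall.1 hx'
    exact mem_iUnion.2 ⟨i, ⟨not_le.1 hi, hx i⟩, hν hx⟩
  calc volume (polyhedron z ν \ polyhedron z ν')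
      ≤ ∑ i, volume ({x : E | ⟪x, z i⟫_ℝ ∈ Ioc (ν' i) (ν i)} ∩ closedBall 0 R) :=
        (measure_mono hsub).trans (measure_iUnion_fintype_le _ _)
    _ ≤ ∑ i, ENNReal.ofReal ((2 * R) ^ (finrank ℝ E - 1) / ‖z i‖ * dist ν ν') := by
        refine Finset.sum_le_sum fun i _ =>
          (volume_inner_mem_Ioc_inter_closedBall_le (hz i) hR _ _).trans ?_
        gcongr
        exact (le_abs_self _).trans ((Real.dist_eq _ _).symm.le.trans (dist_le_pi_dist ν ν' i))
    _ = ENNReal.ofReal ((∑ i, (2 * R) ^ (finrank ℝ E - 1) / ‖z i‖) * dist ν ν') := by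
        rw [← ENNReal.ofReal_sum_of_nonneg fun i _ => by positivity, Finset.sum_mul]

theorem lipschitzOnWith_setIntegral_polyhedron {F : Type*} [NormedAddCommGroup F]
    [NormedSpace ℝ F] (hz : ∀ i, z i ≠ 0) {ρ : E → F} {R C : ℝ} (hR : 0 ≤ R)
    (hρ : IntegrableOn ρ (closedBall 0 R)) (hC : ∀ x ∈ closedBall 0 R, ‖ρ x‖ ≤ C)
    {S : Set (ι → ℝ)} (hS : ∀ ν ∈ S, polyhedron z ν ⊆ closedBall 0 R) :
    LipschitzOnWith (2 * C * ∑ i, (2 * R) ^ (finrank ℝ E - 1) / ‖z i‖).toNNReal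
      (fun ν => ∫ x in polyhedron z ν, ρ x) S := by
  set c := ∑ i, (2 * R) ^ (finrank ℝ E - 1) / ‖z i‖
  have hC0 : 0 ≤ C := (norm_nonneg _).trans (hC 0 (mem_closedBall_self hR))
  have hsdiff : ∀ ν ∈ S, ∀ ν', volume (polyhedron z ν \ polyhedron z ν') < ⊤ ∧
      volume.real (polyhedron z ν \ polyhedron z ν') ≤ c * dist ν ν' := fun ν hν ν' =>
    ⟨(measure_mono (sdiff_subset.trans (hS ν hν))).trans_lt measure_closedBall_lt_top,
      ENNReal.toReal_le_of_le_ofReal (by positivity)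
        (volume_polyhedron_sdiff_le hz hR (hS ν hν) ν')⟩
  refine LipschitzOnWith.of_dist_le_mul fun ν hν ν' hν' => ?_
  rw [Real.coe_toNNReal _ (by positivity)]
  calc dist (∫ x in polyhedron z ν, ρ x) (∫ x in polyhedron z ν', ρ x)
      ≤ C * volume.real (polyhedron z ν \ polyhedron z ν')
          + C * volume.real (polyhedron z ν' \ polyhedron z ν) :=
        dist_setIntegral_le_of_norm_le_const (isClosed_polyhedron z ν).measurableSet
          (isClosed_polyhedron z ν').measurableSet (hρ.mono_set (hS ν hν))
          (hρ.mono_set (hS ν' hν')) (hsdiff ν hν ν').1 (hsdiff ν' hν' ν).1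
          fun x hx => hC x (union_subset (hS ν hν) (hS ν' hν') hx)
    _ ≤ C * (c * dist ν ν') + C * (c * dist ν' ν) := by
        gcongr
        exacts [(hsdiff ν hν ν').2, (hsdiff ν' hν' ν).2]
    _ = 2 * C * c * dist ν ν' := by rw [dist_comm ν']; ring

end Polyhedron

/-- with nonzero vectors `z_i` whose conic hull is `ℝ^k` and a continuous
density `ρ`, the function `G(λ) = ∫_{K(λ)} ρ` is continuous (in fact locally Lipschitz). -/
theorem polytope_integral_continuous {k N : ℕ}
    (z : Fin N → EuclideanSpace ℝ (Fin k)) (hz : ∀ i, z i ≠ 0)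
    (hcone : ∀ x : EuclideanSpace ℝ (Fin k),
      ∃ c : Fin N → ℝ, (∀ i, 0 ≤ c i) ∧ x = ∑ i, c i • z i)
    (ρ : EuclideanSpace ℝ (Fin k) → ℝ) (hρ : Continuous ρ) :
    Continuous (fun lam : Fin N → ℝ =>
        ∫ x in {x : EuclideanSpace ℝ (Fin k) | ∀ i, (inner ℝ x (z i) : ℝ) ≤ lam i}, ρ x) ∧
    LocallyLipschitz (fun lam : Fin N → ℝ =>
        ∫ x in {x : EuclideanSpace ℝ (Fin k) | ∀ i, (inner ℝ x (z i) : ℝ) ≤ lam i}, ρ x) := by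
  suffices h : LocallyLipschitz fun lam => ∫ x in polyhedron z lam, ρ x from ⟨h.continuous, h⟩
  obtain ⟨ε, hε, hbounded⟩ := exists_polyhedron_subset_closedBall hcone
  intro lam₀
  have hM : 0 ≤ ‖lam₀‖ + 1 := by positivity
  obtain ⟨C, hC⟩ := (isCompact_closedBall (0 : EuclideanSpace ℝ (Fin k)) ((‖lam₀‖ + 1) / ε)
    ).exists_bound_of_continuousOn hρ.continuousOn
  refine ⟨_, ball lam₀ 1, ball_mem_nhds _ one_pos, lipschitzOnWith_setIntegral_polyhedron hz
    (by positivity) (hρ.continuousOn.integrableOn_compact (isCompact_closedBall _ _)) hC ?_⟩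
  intro ν hν
  refine hbounded _ hM ν fun i => ?_
  calc ν i ≤ ‖ν‖ := (Real.le_norm_self _).trans (norm_le_pi_norm ν i)
    _ ≤ ‖lam₀‖ + ‖ν - lam₀‖ := norm_le_norm_add_norm_sub' ν lam₀
    _ ≤ ‖lam₀‖ + 1 := by
        rw [← dist_eq_norm]
        gcongr
        exact (mem_ball.1 hν).le
end
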